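/- For any r ≥ 0 and independent X^(k) ∼ Beta(θ/K + (k−1)/K, β/K), k = 1,...,K, the r-th moment of the geometric mean satisfies E[((∏_{k=1}^K X^(k))^{1/K})^r] = B(θ + r, β)/B(θ, β). -/

import Mathlib

open MeasureTheory ProbabilityTheory

/-- The beta function `B(a, b) = Γ(a)Γ(b)/Γ(a+b)`. -/
noncomputable def betaFun (a b : ℝ) : ℝ := Real.Gamma a * Real.Gamma b / Real.Gamma (a + b)

/-- The Beta distribution with parameters `a, b > 0`, defined by its density
`x^(a-1) (1-x)^(b-1) / B(a,b)` on `(0, 1)`. -/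
noncomputable def betaMeasure' (a b : ℝ) : Measure ℝ :=
  volume.withDensity (fun x =>
    ENNReal.ofReal (if x ∈ Set.Ioo (0 : ℝ) 1
      then x ^ (a - 1) * (1 - x) ^ (b - 1) / betaFun a b else 0))

/-!
Since `((∏ X^(k))^(1/K))^r = ∏ (X^(k))^(r/K)`, independence and the Beta moments
`E[(X^(k))^s] = B(a_k + s, b) / B(a_k, b)` give `∏_k B((θ+r+k)/K, β/K) / B((θ+k)/K, β/K)`.
With `G(z) = ∏_{k<K} Γ((z+k)/K)` the numerator and denominator are `Γ(β/K)^K G(z) / G(z+β)`,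
and the multiplication theorem `K^z G(z) = c_K Γ(z)` turns this into
`Γ(β/K)^K K^β / Γ(β) · B(z, β)`; the factor in front cancels in the ratio. The multiplication
theorem, with `c_K` left unevaluated, follows from the Bohr–Mollerup theorem: `K^z G(z) / c_K`
is log-convex and satisfies the functional equation of `Γ`.
-/

open Real Set Finset

theorem convexOn_finset_sum {𝕜 E β ι : Type*} [Semiring 𝕜] [PartialOrder 𝕜]
    [AddCommMonoid E] [AddCommMonoid β] [PartialOrder β] [IsOrderedAddMonoid β] [SMul 𝕜 E]
    [Module 𝕜 β]
    {s : Set E} (hs : Convex 𝕜 s) (t : Finset ι) {f : ι → E → β}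
    (hf : ∀ i ∈ t, ConvexOn 𝕜 s (f i)) :
    ConvexOn 𝕜 s fun x => ∑ i ∈ t, f i x := by
  classical
  induction t using Finset.induction_on with
  | empty => simpa using convexOn_const 0 hs
  | insert i t hi ih =>
    simp only [Finset.sum_insert hi]
    exact (hf i (mem_insert_self i t)).add (ih fun j hj => hf j (mem_insert_of_mem hj))

theorem Real.convexOn_log_Gamma_add_div {c d : ℝ} (hc : 0 < c) (hd : 0 ≤ d) :
    ConvexOn ℝ (Ioi 0) fun z => log (Gamma ((z + d) / c)) := by
  have h := convexOn_log_Gamma.comp_affineMap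
    ((DistribSMul.toLinearMap ℝ ℝ c⁻¹).toAffineMap + AffineMap.const ℝ ℝ (d / c))
  refine (h.subset (fun z (hz : 0 < z) => ?_) (convex_Ioi 0)).congr fun z _ => ?_
  · change 0 < c⁻¹ • z + d / c
    positivity
  · change log (Gamma (c⁻¹ • z + d / c)) = log (Gamma ((z + d) / c))
    rw [smul_eq_mul, add_div, inv_mul_eq_div]

theorem natCast_pos_of_mem_range {k K : ℕ} (hk : k ∈ range K) : (0 : ℝ) < K := by
  exact_mod_cast (mem_range.1 hk).trans_le' k.zero_le

noncomputable def gaussProd (K : ℕ) (z : ℝ) : ℝ :=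
  ∏ k ∈ range K, Gamma ((z + k) / K)

theorem gaussProd_pos (K : ℕ) {z : ℝ} (hz : 0 < z) : 0 < gaussProd K z :=
  prod_pos fun k hk => Gamma_pos_of_pos <| by
    have := natCast_pos_of_mem_range hk
    positivity

theorem gaussProd_add_one {K : ℕ} (hK : 0 < K) {z : ℝ} (hz : 0 < z) :
    gaussProd K (z + 1) = z / K * gaussProd K z := by
  have hK' : (0 : ℝ) < K := by exact_mod_cast hK
  set f : ℕ → ℝ := fun k => Gamma ((z + k) / K)
  have hshift : gaussProd K (z + 1) = ∏ k ∈ range K, f (k + 1) := by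
    refine prod_congr rfl fun k _ => ?_
    simp only [f]
    push_cast
    ring_nf
  -- both sides are `∏_{k ≤ K} f k`, and `f K = (z / K) * f 0`
  have hends : (∏ k ∈ range K, f (k + 1)) * f 0 = z / K * gaussProd K z * f 0 := by
    rw [← prod_range_succ', prod_range_succ]
    simp only [f, gaussProd, Nat.cast_zero, add_zero]
    rw [add_div, div_self hK'.ne', Gamma_add_one (by positivity)]
    ring
  have hf0 : f 0 ≠ 0 := (Gamma_pos_of_pos (by positivity : 0 < (z + (0 : ℕ)) / K)).ne'
  rw [hshift, mul_right_cancel₀ hf0 hends]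

theorem convexOn_log_gaussProd (K : ℕ) : ConvexOn ℝ (Ioi 0) (log ∘ gaussProd K) := by
  refine (convexOn_finset_sum (f := fun k z => log (Gamma ((z + k) / K))) (convex_Ioi 0) (range K)
    fun k hk => ?_).congr fun z hz => ?_
  · exact convexOn_log_Gamma_add_div (natCast_pos_of_mem_range hk) k.cast_nonneg
  · refine (log_prod fun k hk => (Gamma_pos_of_pos ?_).ne').symm
    have := natCast_pos_of_mem_range hk
    have : (0 : ℝ) < z := hz
    positivity

/-- Gauss's multiplication theorem, with the constant `K · G(1) = (2π)^((K-1)/2) K^(1/2)` left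
unevaluated. -/
theorem rpow_mul_gaussProd {K : ℕ} (hK : 0 < K) {z : ℝ} (hz : 0 < z) :
    (K : ℝ) ^ z * gaussProd K z = K * gaussProd K 1 * Gamma z := by
  have hK' : (0 : ℝ) < K := by exact_mod_cast hK
  have hc : 0 < K * gaussProd K 1 := mul_pos hK' (gaussProd_pos K one_pos)
  set f : ℝ → ℝ := fun z => (K : ℝ) ^ z * gaussProd K z / (K * gaussProd K 1)
  have hf_conv : ConvexOn ℝ (Ioi 0) (log ∘ f) := by
    refine ((((convexOn_id (convex_Ioi 0)).smul (log_nonneg (Nat.one_le_cast.2 hK))).add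
      (convexOn_log_gaussProd K)).add_const (-log (K * gaussProd K 1))).congr
      fun y (hy : 0 < y) => ?_
    have := gaussProd_pos K hy
    simp only [f, Function.comp_apply, id, smul_eq_mul, Pi.add_apply]
    rw [log_div (by positivity) hc.ne', log_mul (by positivity) this.ne', log_rpow hK']
    ring
  have hf_feq : ∀ {y : ℝ}, 0 < y → f (y + 1) = y * f y := fun {y} hy => by
    simp only [f]
    rw [gaussProd_add_one hK hy, rpow_add hK', rpow_one]
    field_simp
  have hf_pos : ∀ {y : ℝ}, 0 < y → 0 < f y := fun {y} hy => by
    have := gaussProd_pos K hy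
    positivity
  have hf_one : f 1 = 1 := by simp only [f, rpow_one]; exact div_self hc.ne'
  have := eq_Gamma_of_log_convex hf_conv hf_feq hf_pos hf_one hz
  simp only [f] at this
  rw [← this, mul_div_cancel₀ _ hc.ne']

theorem prod_beta_add_nat_div {K : ℕ} (hK : 0 < K) {z b : ℝ} (hz : 0 < z) (hb : 0 < b) :
    ∏ k ∈ range K, beta ((z + k) / K) (b / K) =
      Gamma (b / K) ^ K * K ^ b / Gamma b * beta z b := by
  have hK' : (0 : ℝ) < K := by exact_mod_cast hK
  have hG : ∀ {w : ℝ}, 0 < w → gaussProd K w = K * gaussProd K 1 * Gamma w / K ^ w :=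
    fun hw => eq_div_of_mul_eq (by positivity) ((mul_comm _ _).trans (rpow_mul_gaussProd hK hw))
  have := Gamma_pos_of_pos (add_pos hz hb)
  have := Gamma_pos_of_pos hz
  have := Gamma_pos_of_pos hb
  have := gaussProd_pos K one_pos
  calc ∏ k ∈ range K, beta ((z + k) / K) (b / K)
      = gaussProd K z * Gamma (b / K) ^ K / gaussProd K (z + b) := by
        simp only [beta, prod_div_distrib, prod_mul_distrib, prod_const, card_range, gaussProd]
        congr 2 with k
        ring_nf
    _ = Gamma (b / K) ^ K * K ^ b / Gamma b * beta z b := by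
        rw [hG hz, hG (add_pos hz hb), rpow_add hK', beta]
        field_simp

theorem prod_beta_div_beta {K : ℕ} (hK : 0 < K) {z w b : ℝ} (hz : 0 < z) (hw : 0 < w)
    (hb : 0 < b) :
    ∏ k ∈ range K, beta ((w + k) / K) (b / K) / beta ((z + k) / K) (b / K) =
      beta w b / beta z b := by
  have hK' : (0 : ℝ) < K := by exact_mod_cast hK
  have := Gamma_pos_of_pos (div_pos hb hK')
  have := Gamma_pos_of_pos hb
  rw [prod_div_distrib, prod_beta_add_nat_div hK hw hb, prod_beta_add_nat_div hK hz hb]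
  exact mul_div_mul_left _ _ (by positivity)

theorem betaFun_eq_beta : betaFun = beta := rfl

theorem betaMeasure'_eq_betaMeasure (a b : ℝ) : betaMeasure' a b = betaMeasure a b := by
  refine congrArg volume.withDensity (funext fun x => congrArg ENNReal.ofReal ?_)
  by_cases hx : x ∈ Ioo (0 : ℝ) 1
  · rw [if_pos hx, betaPDFReal, if_pos (Set.mem_Ioo.1 hx), betaFun_eq_beta]
    ring
  · rw [if_neg hx, betaPDFReal, if_neg (mt Set.mem_Ioo.2 hx)]

theorem measurable_betaPDF (a b : ℝ) : Measurable (betaPDF a b) :=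
  ENNReal.measurable_ofReal.comp (measurable_betaPDFReal a b)

theorem ae_mem_Ioo_betaMeasure (a b : ℝ) : ∀ᵐ x ∂betaMeasure a b, x ∈ Ioo (0 : ℝ) 1 :=
  (ae_withDensity_iff (measurable_betaPDF a b)).2 <| ae_of_all _ fun x hpdf => by
    by_contra hx
    exact hpdf (by rw [betaPDF, betaPDFReal, if_neg (mt Set.mem_Ioo.2 hx), ENNReal.ofReal_zero])

theorem betaPDFReal_nonneg {a b : ℝ} (ha : 0 < a) (hb : 0 < b) (x : ℝ) :
    0 ≤ betaPDFReal a b x := by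
  by_cases hx : 0 < x ∧ x < 1
  · exact (betaPDFReal_pos hx.1 hx.2 ha hb).le
  · rw [betaPDFReal, if_neg hx]

theorem integral_betaPDFReal {a b : ℝ} (ha : 0 < a) (hb : 0 < b) :
    ∫ x, betaPDFReal a b x = 1 := by
  rw [integral_eq_lintegral_of_nonneg_ae (ae_of_all _ (betaPDFReal_nonneg ha hb))
    (measurable_betaPDFReal a b).aestronglyMeasurable]
  exact (ENNReal.toReal_eq_one_iff _).2 (lintegral_betaPDF_eq_one ha hb)

theorem betaPDFReal_mul_rpow {a b s : ℝ} (ha : 0 < a) (hb : 0 < b) (has : 0 < a + s)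
    (x : ℝ) :
    betaPDFReal a b x * x ^ s = beta (a + s) b / beta a b * betaPDFReal (a + s) b x := by
  unfold betaPDFReal
  split_ifs with hx
  · have := beta_pos ha hb
    have := beta_pos has hb
    rw [add_sub_right_comm, rpow_add hx.1]
    field_simp
  · simp

theorem integral_rpow_betaMeasure {a b s : ℝ} (ha : 0 < a) (hb : 0 < b) (has : 0 < a + s) :
    ∫ x, x ^ s ∂betaMeasure a b = beta (a + s) b / beta a b := by
  calc ∫ x, x ^ s ∂betaMeasure a b = ∫ x, betaPDFReal a b x * x ^ s := by
        rw [betaMeasure, integral_withDensity_eq_integral_toReal_smul (measurable_betaPDF a b)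
          (ae_of_all _ fun _ => ENNReal.ofReal_lt_top)]
        congr with x
        rw [betaPDF, ENNReal.toReal_ofReal (betaPDFReal_nonneg ha hb x), smul_eq_mul]
    _ = beta (a + s) b / beta a b := by
        simp_rw [betaPDFReal_mul_rpow ha hb has]
        rw [integral_const_mul, integral_betaPDFReal has hb, mul_one]

theorem integral_rpow_of_map_eq_betaMeasure {Ω : Type*} [MeasurableSpace Ω] {μ : Measure Ω}
    {Y : Ω → ℝ} (hY : AEMeasurable Y μ) {a b s : ℝ} (hlaw : μ.map Y = betaMeasure a b)
    (ha : 0 < a) (hb : 0 < b) (has : 0 < a + s) :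
    ∫ ω, Y ω ^ s ∂μ = beta (a + s) b / beta a b := by
  rw [← integral_rpow_betaMeasure ha hb has, ← hlaw, integral_map hY (by fun_prop)]

theorem geom_mean_beta_moment_general
    {Ω : Type*} [MeasurableSpace Ω] (μ : Measure Ω)
    (K : ℕ) (hK : 0 < K) (θ β : ℝ) (hθ : 0 < θ) (hβ : 0 < β) (r : ℝ) (hr : 0 ≤ r)
    (X : Fin K → Ω → ℝ) (hmeas : ∀ k, Measurable (X k))
    (hindep : iIndepFun X μ)
    (hlaw : ∀ k : Fin K, Measure.map (X k) μ
      = betaMeasure' (θ / K + (k : ℕ) / K) (β / K)) :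
    ∫ ω, ((∏ k, X k ω) ^ ((K : ℝ)⁻¹)) ^ r ∂μ = betaFun (θ + r) β / betaFun θ β := by
  have hlaw' (k : Fin K) : μ.map (X k) = betaMeasure ((θ + k) / K) (β / K) := by
    rw [hlaw k, betaMeasure'_eq_betaMeasure, add_div]
  have hnonneg : ∀ᵐ ω ∂μ, ∀ k, 0 ≤ X k ω := ae_all_iff.2 fun k =>
    (ae_of_ae_map (hmeas k).aemeasurable ((hlaw' k) ▸ ae_mem_Ioo_betaMeasure _ _)).mono
      fun _ hx => hx.1.le
  calc ∫ ω, ((∏ k, X k ω) ^ ((K : ℝ)⁻¹)) ^ r ∂μ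
      = ∫ ω, ∏ k, X k ω ^ (r / K) ∂μ := integral_congr_ae <| hnonneg.mono fun ω hω => by
        dsimp only
        rw [← rpow_mul (prod_nonneg fun k _ => hω k), inv_mul_eq_div,
          finsetProd_rpow _ _ fun k _ => hω k]
    _ = ∏ k, ∫ ω, X k ω ^ (r / K) ∂μ :=
        hindep.integral_fun_prod_comp (f := fun _ x => x ^ (r / K))
          (fun k => (hmeas k).aemeasurable) fun _ => by fun_prop
    _ = ∏ k : Fin K, beta ((θ + r + k) / K) (β / K) / beta ((θ + k) / K) (β / K) :=
        prod_congr rfl fun k _ => by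
          rw [integral_rpow_of_map_eq_betaMeasure (hmeas k).aemeasurable (hlaw' k)
            (by positivity) (by positivity) (by positivity), ← add_div, add_right_comm]
    _ = betaFun (θ + r) β / betaFun θ β := by
        rw [Fin.prod_univ_eq_prod_range (fun k => beta ((θ + r + k) / K) (β / K) /
          beta ((θ + k) / K) (β / K)), prod_beta_div_beta hK hθ (by positivity) hβ,
          betaFun_eq_beta]

/-- For any `r ≥ 0` and independent `X^(k) ∼ Beta(θ/K + k/K, β/K)`, `k = 0, ..., K-1`,
the `r`-th moment of the geometric mean satisfies
`E[((∏ k, X^(k))^(1/K))^r] = B(θ + r, β) / B(θ, β)`. -/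
theorem geom_mean_beta_moment
    {Ω : Type*} [MeasurableSpace Ω] (μ : Measure Ω) [IsProbabilityMeasure μ]
    (K : ℕ) (hK : 0 < K) (θ β : ℝ) (hθ : 0 < θ) (hβ : 0 < β) (r : ℝ) (hr : 0 ≤ r)
    (X : Fin K → Ω → ℝ) (hmeas : ∀ k, Measurable (X k))
    (hindep : iIndepFun X μ)
    (hlaw : ∀ k : Fin K, Measure.map (X k) μ
      = betaMeasure' (θ / K + (k : ℕ) / K) (β / K)) :
    ∫ ω, ((∏ k, X k ω) ^ ((K : ℝ)⁻¹)) ^ r ∂μ = betaFun (θ + r) β / betaFun θ β :=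
  geom_mean_beta_moment_general μ K hK θ β hθ hβ r hr X hmeas hindep hlaw
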